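/- Let G be a connected complex reductive group with maximal torus T and Weyl group W(G) = N_G(T)/T. Let A be a subgroup of T and M = Z_G(A) its centralizer. Then the pointwise stabilizer of A in W(G), namely W(G)_A = {w ∈ W(G) : w(t) = t for all t ∈ A}, equals N_M(T)/T. -/

import Mathlib

/-! Fixing `A` pointwise under conjugation means centralizing `A`. Since `T` is abelian and
contains `A`, it lies in `Z_G(A)`, so a coset `nT` meeting `Z_G(A)` lies entirely in it: "some
representative of `w` centralizes `A`" and "every representative does" are the same condition. -/

namespace Subgroup

variable {G : Type*} [Group G]

theorem mem_centralizer_iff_conj_eq {g : G} {s : Set G} :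
    g ∈ centralizer s ↔ ∀ a ∈ s, g * a * g⁻¹ = a := by
  rw [mem_centralizer_iff]
  exact forall₂_congr fun a _ => by rw [mul_inv_eq_iff_eq_mul, eq_comm]

theorem le_centralizer_of_le_of_comm {T A : Subgroup G} (hAT : A ≤ T)
    (hT : ∀ x ∈ T, ∀ y ∈ T, x * y = y * x) : T ≤ centralizer (A : Set G) :=
  fun t ht => mem_centralizer_iff.mpr fun a ha => hT a (hAT ha) t ht

theorem mem_of_mk_eq_mk_of_le {K T C : Subgroup G} (hTC : T ≤ C) {n n' : K}
    (h : (n : K ⧸ T.subgroupOf K) = n') (hn : (n : G) ∈ C) : (n' : G) ∈ C := by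
  have hmem : (n : G)⁻¹ * n' ∈ T := by
    simpa [mem_subgroupOf] using QuotientGroup.eq.mp h
  simpa using C.mul_mem hn (hTC hmem)

end Subgroup

open Subgroup in
/-- Let G be a connected complex reductive group with maximal torus T and
Weyl group W(G) = N_G(T)/T.  Let A be a subgroup of T and M = Z_G(A) its centralizer.
Then the pointwise stabilizer of A in W(G) equals N_M(T)/T.

We model G as an abstract group, T as a commutative subgroup, A ≤ T, and
M = Z_G(A) = `Subgroup.centralizer A`.  The Weyl group is N_G(T)/T; since T is abelian
and A ≤ T, the condition "w fixes A pointwise" is independent of the choice of a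
representative n of w, and N_M(T)/T is realised as the image in N_G(T)/T of
N_G(T) ∩ M. -/
theorem stmt9 (G : Type*) [Group G] (T A : Subgroup G) (hAT : A ≤ T)
    (hT : ∀ x ∈ T, ∀ y ∈ T, x * y = y * x) :
    {q : (Subgroup.normalizer (T : Set G)) ⧸ T.subgroupOf (Subgroup.normalizer (T : Set G)) |
        ∀ n : (Subgroup.normalizer (T : Set G)), QuotientGroup.mk n = q →
          ∀ a ∈ A, (n : G) * a * (n : G)⁻¹ = a}
      =
    {q : (Subgroup.normalizer (T : Set G)) ⧸ T.subgroupOf (Subgroup.normalizer (T : Set G)) |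
        ∃ n : (Subgroup.normalizer (T : Set G)), QuotientGroup.mk n = q ∧
          (n : G) ∈ Subgroup.centralizer (A : Set G)} := by
  ext q
  constructor
  · intro h
    obtain ⟨n, hn⟩ := QuotientGroup.mk_surjective q
    exact ⟨n, hn, mem_centralizer_iff_conj_eq.mpr (h n hn)⟩
  · rintro ⟨n, rfl, hn⟩ n' hn'
    exact mem_centralizer_iff_conj_eq.mp <|
      mem_of_mk_eq_mk_of_le (le_centralizer_of_le_of_comm hAT hT) hn'.symm hn
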